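/- arXiv:math/0308202 — 6 statements merged into one kernel-verified Lean document; each statement's English description precedes it below -/
import Mathlib

section
/- Let k be an algebraically closed field of characteristic p > 0 and let B ∈ M_{n×n}(k), C₀ ∈ M_{n×1}(k). Then the number of solutions in kⁿ of the Artin–Schreier system x = B·x^[p] + C₀ is exactly p^m for some m ∈ {0,…,n}. -/
/-!
Put `φ x = B · x^[p]`, a Frobenius-semilinear endomorphism of `V = kⁿ`; the solutions form the
fibre over `C₀` of the additive map `x ↦ x - φ x`. Its kernel, the set of fixed points of `φ`, is
a vector space over the fixed field `𝔽_p` of Frobenius, and a minimal-relation argument shows that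
`𝔽_p`-independent fixed vectors are `k`-independent, so the kernel has `p ^ m` elements with
`m ≤ n`. The fibre is not empty: the iterates of `φ` on `C₀` satisfy a relation
`φ^m C₀ = ∑_{i<m} aᵢ φ^i C₀`, and along it the equation reduces to a single polynomial equation
`f(t) = t` in `k`, solvable because `f` has no linear term.
-/

open Finset Polynomial Module Submodule

namespace ArtinSchreier

theorem exists_iterate_eq_sum_smul {R M : Type*} [Semiring R] [AddCommMonoid M] [Module R M]
    [IsNoetherian R M] (f : M → M) (c : M) :
    ∃ m, ∃ a : ℕ → R, f^[m] c = ∑ i ∈ range m, a i • f^[i] c := by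
  let W : ℕ →o Submodule R M :=
    ⟨fun m => span R ((f^[·] c) '' ↑(range m)),
      fun _ _ h => span_mono (Set.image_mono (by simpa using h))⟩
  obtain ⟨m, hm⟩ := monotone_stabilizes_iff_noetherian.mpr ‹_› W
  have hmem : f^[m] c ∈ W m := hm (m + 1) m.le_succ ▸ subset_span ⟨m, by simp, rfl⟩
  obtain ⟨l, hl, hsum⟩ := (Finsupp.mem_span_image_iff_linearCombination R).mp hmem
  refine ⟨m, l, ?_⟩
  rw [← hsum, Finsupp.linearCombination_apply]
  exact Finsupp.sum_of_support_subset l hl _ (by simp)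

theorem exists_eval_eq_self_of_coeff_one_eq_zero {k : Type*} [Field k] [IsAlgClosed k]
    {f : k[X]} (hf : f.coeff 1 = 0) : ∃ t, f.eval t = t := by
  have hdeg : (f - X).degree ≠ 0 := fun h => by
    have h1 : (f - X).coeff 1 = -1 := by simp [hf]
    rw [eq_C_of_degree_eq_zero h, coeff_C] at h1
    simp at h1
  obtain ⟨t, ht⟩ := IsAlgClosed.exists_root _ hdeg
  exact ⟨t, by simpa [sub_eq_zero] using ht⟩

section FixedPoints

variable {k V : Type*} [Field k] [AddCommGroup V] [Module k V] {σ : k →+* k} (φ : V →ₛₗ[σ] V)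

def fixedSubmodule : Submodule (σ.eqLocusField (RingHom.id k)) V where
  carrier := {x | φ x = x}
  add_mem' {x y} hx hy := by simp_all
  zero_mem' := map_zero φ
  smul_mem' a x hx := by
    have ha : σ a = a := a.2
    simp_all [Subfield.smul_def]

@[simp]
theorem mem_fixedSubmodule {x : V} : x ∈ fixedSubmodule φ ↔ φ x = x := Iff.rfl

theorem linearIndependent_of_isFixedPt {ι : Type*} {v : ι → V} (hv : ∀ i, φ (v i) = v i)
    (hli : LinearIndependent (σ.eqLocusField (RingHom.id k)) v) : LinearIndependent k v := by
  classical
  rw [linearIndependent_iff'] at hli ⊢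
  intro s
  induction s using Finset.strongInduction with
  | H s ih =>
  intro g hg i₀ hi₀
  by_contra hgi₀
  set h : ι → k := fun i => (g i₀)⁻¹ * g i
  have hh : ∑ i ∈ s, h i • v i = 0 := by
    simp only [h, mul_smul, ← smul_sum, hg, smul_zero]
  have hσh : ∑ i ∈ s, σ (h i) • v i = 0 := by
    simpa [map_sum, hv] using congrArg φ hh
  -- `σ h - h` is a relation with fewer terms, as `h i₀ = 1`
  have hfix : ∀ i ∈ s, σ (h i) = h i := by
    have hrel : ∑ i ∈ s.erase i₀, (σ (h i) - h i) • v i = 0 := by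
      rw [sum_erase _ (by simp [h, hgi₀])]
      simp [sub_smul, sum_sub_distrib, hh, hσh]
    intro i hi
    by_cases hi' : i = i₀
    · simp [hi', h, hgi₀]
    · exact sub_eq_zero.mp (ih _ (erase_ssubset hi₀) _ hrel i (mem_erase.mpr ⟨hi', hi⟩))
  let h' : ι → σ.eqLocusField (RingHom.id k) := fun i =>
    if hi : σ (h i) = h i then ⟨h i, hi⟩ else 0
  have hh' : ∀ i ∈ s, (h' i : k) = h i := fun i hi => by simp [h', hfix i hi]
  have hrel : ∑ i ∈ s, h' i • v i = 0 := by
    rw [← hh]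
    exact sum_congr rfl fun i hi => by rw [Subfield.smul_def, hh' i hi]
  have hzero : h i₀ = 0 := by
    rw [← hh' i₀ hi₀, hli s h' hrel i₀ hi₀, ZeroMemClass.coe_zero]
  simp [h, hgi₀] at hzero

theorem rank_fixedSubmodule_le [FiniteDimensional k V] :
    Module.rank (σ.eqLocusField (RingHom.id k)) (fixedSubmodule φ) ≤ finrank k V := by
  refine rank_le fun s hs => ?_
  have hli := linearIndependent_of_isFixedPt φ (v := fun i : s => ((i : fixedSubmodule φ) : V))
    (fun i => (i : fixedSubmodule φ).2) (hs.map' _ (Submodule.ker_subtype _))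
  simpa using hli.fintype_card_le_finrank

theorem exists_natCard_fixedSubmodule_eq_pow [FiniteDimensional k V]
    [Finite (σ.eqLocusField (RingHom.id k))] :
    ∃ m ≤ finrank k V,
      Nat.card (fixedSubmodule φ) = Nat.card (σ.eqLocusField (RingHom.id k)) ^ m := by
  have hr := rank_fixedSubmodule_le φ
  have : Module.Finite (σ.eqLocusField (RingHom.id k)) (fixedSubmodule φ) :=
    Module.rank_lt_aleph0_iff.mp (hr.trans_lt (Cardinal.natCast_lt_aleph0))
  exact ⟨_, Module.finrank_le_of_rank_le hr, Module.natCard_eq_pow_finrank⟩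

theorem natCard_sub_eq_natCard_fixedSubmodule {c : V} (hc : ∃ x, x - φ x = c) :
    Nat.card {x // x - φ x = c} = Nat.card (fixedSubmodule φ) := by
  obtain ⟨x₀, rfl⟩ := hc
  refine Nat.card_congr
    { toFun x := ⟨x - x₀, ?_⟩
      invFun y := ⟨y + x₀, ?_⟩
      left_inv x := by simp
      right_inv y := by simp }
  · rw [mem_fixedSubmodule, map_sub]
    exact (sub_eq_sub_iff_sub_eq_sub.mp x.2).symm
  · rw [map_add, (mem_fixedSubmodule φ).mp y.2]
    abel

end FixedPoints

/-- If `φ^[m] c = ∑ i < m, aᵢ • φ^[i] c` with `φ` Frobenius-semilinear, `t` is a fixed point of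
`krylovSolutionPoly p a m` and `qᵢ = (krylovSolutionPoly p a i).eval t`, then
`x = ∑ i < m, (qᵢ + aᵢ t) • φ^[i] c` solves `x - φ x = c`, because
`φ x = ∑ i < m, q_{i+1} • φ^[i+1] c` while `x = ∑ i ≤ m, qᵢ • φ^[i] c` and `q₀ = 1`. -/
noncomputable def krylovSolutionPoly (p : ℕ) {R : Type*} [CommSemiring R] (a : ℕ → R) :
    ℕ → R[X]
  | 0 => 1
  | i + 1 => (krylovSolutionPoly p a i + C (a i) * X) ^ p

section Frobenius

variable {p : ℕ} [Fact p.Prime]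

theorem coeff_one_pow_char {R : Type*} [CommSemiring R] [CharP R p] (g : R[X]) :
    (g ^ p).coeff 1 = 0 := by
  rw [← map_frobenius_expand, coeff_map, coeff_expand (Fact.out : p.Prime).pos,
    if_neg (Nat.Prime.not_dvd_one Fact.out), map_zero]

theorem coeff_one_krylovSolutionPoly {R : Type*} [CommSemiring R] [CharP R p] (a : ℕ → R)
    (i : ℕ) : (krylovSolutionPoly p a i).coeff 1 = 0 := by
  cases i <;> simp [krylovSolutionPoly, coeff_one, coeff_one_pow_char]

theorem natCard_eqLocusField_frobenius (k : Type*) [Field k] [CharP k p] :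
    Nat.card ((frobenius k p).eqLocusField (RingHom.id k)) = p := by
  have : (frobenius k p).eqLocusField (RingHom.id k) = ⊥ := by
    ext x
    simp [RingHom.mem_eqLocusField, frobenius_def, Subfield.mem_bot_iff_pow_eq_self k p]
  rw [this, Subfield.card_bot k p]

variable {k V : Type*} [Field k] [CharP k p] [AddCommGroup V] [Module k V]
  (φ : V →ₛₗ[frobenius k p] V)

theorem exists_sub_eq_of_iterate_eq_sum [IsAlgClosed k] {c : V} {m : ℕ} {a : ℕ → k}
    (h : φ^[m] c = ∑ i ∈ range m, a i • φ^[i] c) : ∃ x, x - φ x = c := by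
  obtain ⟨t, ht⟩ := exists_eval_eq_self_of_coeff_one_eq_zero (coeff_one_krylovSolutionPoly a m)
  set q : ℕ → k := fun i => (krylovSolutionPoly p a i).eval t
  have hq : ∀ i, q (i + 1) = (q i + a i * t) ^ p := by simp [q, krylovSolutionPoly]
  refine ⟨∑ i ∈ range m, (q i + a i * t) • φ^[i] c, ?_⟩
  have hφ : φ (∑ i ∈ range m, (q i + a i * t) • φ^[i] c) =
      ∑ i ∈ range m, q (i + 1) • φ^[i + 1] c := by
    simp [map_sum, hq, frobenius_def, Function.iterate_succ_apply']
  have hx : ∑ i ∈ range m, (q i + a i * t) • φ^[i] c = ∑ i ∈ range (m + 1), q i • φ^[i] c := by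
    rw [sum_range_succ, show q m = t from ht, h, smul_sum, ← sum_add_distrib]
    exact sum_congr rfl fun i _ => by rw [add_smul, mul_comm, mul_smul]
  rw [hφ, hx, sum_range_succ', add_sub_cancel_left]
  simp [q, krylovSolutionPoly]

theorem surjective_self_sub [IsAlgClosed k] [FiniteDimensional k V] :
    Function.Surjective fun x => x - φ x := fun c => by
  obtain ⟨m, a, h⟩ := exists_iterate_eq_sum_smul (R := k) φ c
  exact exists_sub_eq_of_iterate_eq_sum φ h

theorem exists_natCard_sub_eq_pow [IsAlgClosed k] [FiniteDimensional k V] (c : V) :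
    ∃ m ≤ finrank k V, Nat.card {x // x - φ x = c} = p ^ m := by
  have : Finite ((frobenius k p).eqLocusField (RingHom.id k)) := by
    refine Nat.finite_of_card_ne_zero ?_
    rw [natCard_eqLocusField_frobenius]
    exact (Fact.out : p.Prime).ne_zero
  obtain ⟨m, hm, hcard⟩ := exists_natCard_fixedSubmodule_eq_pow φ
  refine ⟨m, hm, ?_⟩
  rw [natCard_sub_eq_natCard_fixedSubmodule φ (surjective_self_sub φ c), hcard,
    natCard_eqLocusField_frobenius]

end Frobenius

def mulVecFrobenius (p : ℕ) [Fact p.Prime] {k ι : Type*} [Field k] [CharP k p] [Fintype ι]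
    (B : Matrix ι ι k) : (ι → k) →ₛₗ[frobenius k p] (ι → k) where
  toFun x := B.mulVec fun j => x j ^ p
  map_add' x y := by
    rw [← Matrix.mulVec_add]
    congr 1 with j
    exact add_pow_char (x j) (y j) p
  map_smul' a x := by
    rw [frobenius_def, ← Matrix.mulVec_smul]
    congr 1 with j
    exact mul_pow a (x j) p

end ArtinSchreier

open ArtinSchreier in
/-- Over an algebraically closed field `k` of characteristic `p > 0`, the number of solutions
in `kⁿ` of the Artin–Schreier system `x = B·x^[p] + C₀` is exactly `p ^ m` for some
`m ∈ {0, …, n}`. -/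
theorem artin_schreier_card_solutions
    (p : ℕ) (hp : p.Prime) (k : Type*) [Field k] [IsAlgClosed k] [CharP k p]
    (n : ℕ) (B : Matrix (Fin n) (Fin n) k) (C₀ : Fin n → k) :
    ∃ m : ℕ, m ≤ n ∧
      Nat.card {x : Fin n → k // ∀ i, x i = (∑ j, B i j * (x j) ^ p) + C₀ i} = p ^ m := by
  have := Fact.mk hp
  have hsol (x : Fin n → k) :
      (∀ i, x i = (∑ j, B i j * (x j) ^ p) + C₀ i) ↔ x - mulVecFrobenius p B x = C₀ := by
    simp [mulVecFrobenius, funext_iff, sub_eq_iff_eq_add', Matrix.mulVec, dotProduct]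
  obtain ⟨m, hm, hcard⟩ := exists_natCard_sub_eq_pow (mulVecFrobenius p B) C₀
  exact ⟨m, by simpa using hm, by rw [Nat.card_congr (Equiv.subtypeEquivRight hsol), hcard]⟩
end

section
/- Let k be a perfect field of characteristic p > 0, W(k) its ring of Witt vectors, and M a free W(k)-module of finite rank with a σ-linear map φ: M → M (σ the Frobenius automorphism of W(k)). Suppose φ permutes, up to unit multiples and powers of p, the elements of a basis {a₁,…,a_{n+m}} in the sense that φ(a_i) = u_i p^{ε_i} a_{π(i)} for units u_i ∈ W(k)ˣ, exponents ε_i ∈ {0,1}, and a permutation π of {1,…,n+m}. If k is algebraically closed, then one can rescale the basis, replacing each a_i by a unit multiple, so that φ(a_i) = p^{ε_i} a_{π(i)} for all i. -/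
set_option linter.unusedSectionVars false

noncomputable section

namespace FrobAux

open WittVector Polynomial

variable (p : ℕ) [hp : Fact p.Prime]

local notation "𝕎" => WittVector p

variable {k : Type*} [Field k] [CharP k p] [IsAlgClosed k]

theorem coeff_iterate_frobenius (r : ℕ) (x : 𝕎 k) (n : ℕ) :
    ((WittVector.frobenius (p := p))^[r] x).coeff n = x.coeff n ^ p ^ r := by
  induction r with
  | zero => simp
  | succ r ih =>
      rw [Function.iterate_succ_apply', WittVector.coeff_frobenius_charP, ih, ← pow_mul,
        pow_succ]

variable (q : ℕ)

/-- generalized defining polynomial, exponent `q` in place of `p`. -/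
def poly (n : ℕ) (a₁ a₂ : 𝕎 k) (bs : Fin (n + 1) → k) : Polynomial k :=
  X ^ q * C (a₁.coeff 0 ^ p ^ (n + 1)) - X * C (a₂.coeff 0 ^ p ^ (n + 1)) +
    C
      (a₁.coeff (n + 1) * (bs 0 ^ q) ^ p ^ (n + 1) +
            nthRemainder p n (fun v => bs v ^ q) (truncateFun (n + 1) a₁) -
          a₂.coeff (n + 1) * bs 0 ^ p ^ (n + 1) -
        nthRemainder p n bs (truncateFun (n + 1) a₂))

theorem poly_degree (hq : 1 < q) (n : ℕ) (a₁ a₂ : 𝕎 k) (bs : Fin (n + 1) → k)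
    (ha₁ : a₁.coeff 0 ≠ 0) (ha₂ : a₂.coeff 0 ≠ 0) :
    (poly p q n a₁ a₂ bs).degree = q := by
  have H1 : (X ^ q * C (a₁.coeff 0 ^ p ^ (n + 1)) : Polynomial k).degree = (q : WithBot ℕ) := by
    rw [degree_mul, degree_C]
    · simp only [Nat.cast_withBot, add_zero, degree_X, degree_pow, Nat.smul_one_eq_cast]
    · exact pow_ne_zero _ ha₁
  have H2 : (X ^ q * C (a₁.coeff 0 ^ p ^ (n + 1)) - X * C (a₂.coeff 0 ^ p ^ (n + 1)) :
      Polynomial k).degree = (q : WithBot ℕ) := by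
    rw [degree_sub_eq_left_of_degree_lt, H1]
    rw [H1, degree_mul, degree_C, degree_X, add_zero]
    · exact mod_cast hq
    · exact pow_ne_zero _ ha₂
  rw [poly, degree_add_eq_left_of_degree_lt, H2]
  apply lt_of_le_of_lt degree_C_le
  rw [H2]
  exact_mod_cast (by omega : 0 < q)

theorem root_exists (hq : 1 < q) (n : ℕ) (a₁ a₂ : 𝕎 k) (bs : Fin (n + 1) → k)
    (ha₁ : a₁.coeff 0 ≠ 0) (ha₂ : a₂.coeff 0 ≠ 0) :
    ∃ b : k, (poly p q n a₁ a₂ bs).IsRoot b :=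
  IsAlgClosed.exists_root _ <| by
    simp only [poly_degree p q hq n a₁ a₂ bs ha₁ ha₂, ne_eq, Nat.cast_eq_zero]
    omega

def succNthVal (hq : 1 < q) (n : ℕ) (a₁ a₂ : 𝕎 k) (bs : Fin (n + 1) → k)
    (ha₁ : a₁.coeff 0 ≠ 0) (ha₂ : a₂.coeff 0 ≠ 0) : k :=
  Classical.choose (root_exists p q hq n a₁ a₂ bs ha₁ ha₂)

theorem succNthVal_spec (hq : 1 < q) (n : ℕ) (a₁ a₂ : 𝕎 k) (bs : Fin (n + 1) → k)
    (ha₁ : a₁.coeff 0 ≠ 0) (ha₂ : a₂.coeff 0 ≠ 0) :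
    (poly p q n a₁ a₂ bs).IsRoot (succNthVal p q hq n a₁ a₂ bs ha₁ ha₂) :=
  Classical.choose_spec (root_exists p q hq n a₁ a₂ bs ha₁ ha₂)

theorem succNthVal_spec' (hq : 1 < q) (n : ℕ) (a₁ a₂ : 𝕎 k) (bs : Fin (n + 1) → k)
    (ha₁ : a₁.coeff 0 ≠ 0) (ha₂ : a₂.coeff 0 ≠ 0) :
    succNthVal p q hq n a₁ a₂ bs ha₁ ha₂ ^ q * a₁.coeff 0 ^ p ^ (n + 1) +
          a₁.coeff (n + 1) * (bs 0 ^ q) ^ p ^ (n + 1) +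
        nthRemainder p n (fun v => bs v ^ q) (truncateFun (n + 1) a₁) =
      succNthVal p q hq n a₁ a₂ bs ha₁ ha₂ * a₂.coeff 0 ^ p ^ (n + 1) +
          a₂.coeff (n + 1) * bs 0 ^ p ^ (n + 1) +
        nthRemainder p n bs (truncateFun (n + 1) a₂) := by
  rw [← sub_eq_zero]
  have := succNthVal_spec p q hq n a₁ a₂ bs ha₁ ha₂
  simp only [Polynomial.map_add, Polynomial.eval_X, Polynomial.map_pow, Polynomial.eval_C,
    Polynomial.eval_pow, poly, Polynomial.eval_mul, Polynomial.eval_add,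
    Polynomial.eval_sub, Polynomial.map_mul, Polynomial.map_sub, Polynomial.IsRoot.def] at this
  convert this using 1
  ring

theorem solution_pow (a₁ a₂ : 𝕎 k) (hq : 1 < q) :
    ∃ x : k, x ^ (q - 1) = a₂.coeff 0 / a₁.coeff 0 :=
  IsAlgClosed.exists_pow_nat_eq _ <| by omega

def solution (hq : 1 < q) (a₁ a₂ : 𝕎 k) : k :=
  Classical.choose <| solution_pow p q a₁ a₂ hq

theorem solution_spec (hq : 1 < q) (a₁ a₂ : 𝕎 k) :
    solution p q hq a₁ a₂ ^ (q - 1) = a₂.coeff 0 / a₁.coeff 0 :=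
  Classical.choose_spec <| solution_pow p q a₁ a₂ hq

theorem solution_nonzero (hq : 1 < q) {a₁ a₂ : 𝕎 k} (ha₁ : a₁.coeff 0 ≠ 0)
    (ha₂ : a₂.coeff 0 ≠ 0) : solution p q hq a₁ a₂ ≠ 0 := by
  intro h
  have := solution_spec p q hq a₁ a₂
  rw [h, zero_pow] at this
  · simpa [ha₁, ha₂] using _root_.div_eq_zero_iff.mp this.symm
  · omega

theorem solution_spec' (hq : 1 < q) {a₁ : 𝕎 k} (ha₁ : a₁.coeff 0 ≠ 0) (a₂ : 𝕎 k) :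
    solution p q hq a₁ a₂ ^ q * a₁.coeff 0 = solution p q hq a₁ a₂ * a₂.coeff 0 := by
  have := solution_spec p q hq a₁ a₂
  have hpow : solution p q hq a₁ a₂ ^ q = solution p q hq a₁ a₂ * solution p q hq a₁ a₂ ^ (q - 1) := by
    rw [← pow_succ']
    congr 1
    omega
  rw [hpow, this]
  field_simp [ha₁, mul_comm]

@[semireducible] noncomputable def rotCoeff (hq : 1 < q) {a₁ a₂ : 𝕎 k} (ha₁ : a₁.coeff 0 ≠ 0)
    (ha₂ : a₂.coeff 0 ≠ 0) : ℕ → k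
  | 0 => solution p q hq a₁ a₂
  | n + 1 => succNthVal p q hq n a₁ a₂ (fun i => rotCoeff hq ha₁ ha₂ i.val) ha₁ ha₂

def rot (hq : 1 < q) {a₁ a₂ : 𝕎 k} (ha₁ : a₁.coeff 0 ≠ 0) (ha₂ : a₂.coeff 0 ≠ 0) : 𝕎 k :=
  WittVector.mk p (rotCoeff p q hq ha₁ ha₂)

theorem rot_coeff_zero (hq : 1 < q) {a₁ a₂ : 𝕎 k} (ha₁ : a₁.coeff 0 ≠ 0)
    (ha₂ : a₂.coeff 0 ≠ 0) : (rot p q hq ha₁ ha₂).coeff 0 ≠ 0 := by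
  simpa [rot, rotCoeff] using solution_nonzero p q hq ha₁ ha₂

theorem frobenius_rot (r : ℕ) (hq : 1 < p ^ r) {a₁ a₂ : 𝕎 k} (ha₁ : a₁.coeff 0 ≠ 0)
    (ha₂ : a₂.coeff 0 ≠ 0) :
    (WittVector.frobenius (p := p))^[r] (rot p (p ^ r) hq ha₁ ha₂) * a₁ =
      rot p (p ^ r) hq ha₁ ha₂ * a₂ := by
  ext n
  cases' n with n
  · simp only [WittVector.mul_coeff_zero, coeff_iterate_frobenius, rot, rotCoeff,
      WittVector.coeff_mk]
    apply solution_spec' _ _ hq ha₁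
  · simp only [nthRemainder_spec, coeff_iterate_frobenius, rotCoeff, rot, WittVector.coeff_mk]
    have :=
      succNthVal_spec' p (p ^ r) hq n a₁ a₂
        (fun i : Fin (n + 1) => rotCoeff p (p ^ r) hq ha₁ ha₂ i.val) ha₁ ha₂
    simp only [rotCoeff, Fin.val_zero] at this
    convert this using 3
    congr 1
    apply TruncatedWittVector.ext
    intro i
    simp only [WittVector.coeff_truncateFun, coeff_iterate_frobenius, WittVector.coeff_mk]
    rfl
    rfl


theorem exists_unit_sol (r : ℕ) (hr : 0 < r) (c : (𝕎 k)ˣ) :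
    ∃ t : (𝕎 k)ˣ, (WittVector.frobenius (p := p))^[r] (t : 𝕎 k) =
      (t : 𝕎 k) * ((c⁻¹ : (𝕎 k)ˣ) : 𝕎 k) := by
  have hq : 1 < p ^ r := Nat.one_lt_pow (by omega) hp.out.one_lt
  have ha₁ : (c : 𝕎 k).coeff 0 ≠ 0 := by
    intro h
    have h1 : ((c : 𝕎 k) * ((c⁻¹ : (𝕎 k)ˣ) : 𝕎 k)).coeff 0 = 1 := by
      rw [Units.mul_inv]
      exact WittVector.one_coeff_zero p k
    rw [WittVector.mul_coeff_zero, h, zero_mul] at h1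
    exact zero_ne_one h1
  have ha₂ : (1 : 𝕎 k).coeff 0 ≠ 0 := by
    rw [WittVector.one_coeff_zero]; exact one_ne_zero
  have key := frobenius_rot p r hq ha₁ ha₂
  rw [mul_one] at key
  obtain ⟨t, ht⟩ := WittVector.isUnit_of_coeff_zero_ne_zero _ (rot_coeff_zero p (p ^ r) hq ha₁ ha₂)
  refine ⟨t, ?_⟩
  rw [ht]
  conv_rhs => rw [← key]
  rw [Units.mul_inv_cancel_right]


end FrobAux

end

/-- Let `k` be an algebraically closed field of characteristic `p > 0` and `W(k)` its Witt
vectors, with Frobenius `σ`.  If a `σ`-linear map `φ` of a free `W(k)`-module `M` permutes the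
elements of a basis `a₁,…,a_{n+m}` up to unit multiples and powers of `p`, i.e.
`φ(aᵢ) = uᵢ p^{εᵢ} a_{π(i)}` with `uᵢ` units and `εᵢ ∈ {0,1}`, then one can rescale the basis
by units so that `φ(aᵢ) = p^{εᵢ} a_{π(i)}` for all `i`. -/
theorem rescale_basis_of_semilinear_permutation
    (p : ℕ) [Fact p.Prime] (k : Type*) [Field k] [CharP k p] [IsAlgClosed k]
    (M : Type*) [AddCommGroup M] [Module (WittVector p k) M]
    (N : ℕ) (a : Module.Basis (Fin N) (WittVector p k) M)
    (φ : M → M)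
    (hadd : ∀ x y, φ (x + y) = φ x + φ y)
    (hsemi : ∀ (c : WittVector p k) (x : M), φ (c • x) = WittVector.frobenius c • φ x)
    (π : Equiv.Perm (Fin N)) (ε : Fin N → ℕ) (hε : ∀ i, ε i ≤ 1)
    (u : Fin N → (WittVector p k)ˣ)
    (hφa : ∀ i, φ (a i) = (u i : WittVector p k) • ((p : WittVector p k) ^ ε i • a (π i))) :
    ∃ v : Fin N → (WittVector p k)ˣ,
      ∀ i, φ ((v i : WittVector p k) • a i) =
        (p : WittVector p k) ^ ε i • ((v (π i) : WittVector p k) • a (π i)) := by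
  classical
  let Φ : (WittVector p k)ˣ →* (WittVector p k)ˣ :=
    Units.map (WittVector.frobenius : WittVector p k →+* WittVector p k).toMonoidHom
  have hΦcoe : ∀ (m : ℕ) (t : (WittVector p k)ˣ),
      ((Φ^[m] t : (WittVector p k)ˣ) : WittVector p k) =
        (WittVector.frobenius (p := p))^[m] (t : WittVector p k) := by
    intro m
    induction m with
    | zero => intro t; rfl
    | succ m ih =>
        intro t
        rw [Function.iterate_succ_apply', Function.iterate_succ_apply', ← ih]
        rfl
  have hsol : ∀ r : ℕ, 0 < r → ∀ c : (WittVector p k)ˣ,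
      ∃ t : (WittVector p k)ˣ, Φ^[r] t = t * c⁻¹ := by
    intro r hr c
    obtain ⟨t, htt⟩ := FrobAux.exists_unit_sol p r hr c
    refine ⟨t, Units.ext ?_⟩
    rw [hΦcoe, htt]
    rfl
  let s : Setoid (Fin N) :=
    ⟨π.SameCycle, ⟨fun x => Equiv.Perm.SameCycle.refl π x, fun h => h.symm,
      fun h h' => h.trans h'⟩⟩
  let rep : Fin N → Fin N := fun i => (Quotient.mk s i).out
  have hrep : ∀ i, π.SameCycle (rep i) i := fun i => Quotient.mk_out (s := s) i
  have hrep_pi : ∀ i, rep (π i) = rep i := by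
    intro i
    have hsc : π.SameCycle (π i) i :=
      (Equiv.Perm.sameCycle_apply_left (f := π) (x := i) (y := i)).mpr
        (Equiv.Perm.SameCycle.refl π i)
    have h : Quotient.mk s (π i) = Quotient.mk s i := Quotient.sound hsc
    show (Quotient.mk s (π i)).out = (Quotient.mk s i).out
    rw [h]
  have hd : ∀ i, ∃ m : ℕ, (π ^ m) (rep i) = i := by
    intro i
    obtain ⟨m, _, hm⟩ := (hrep i).exists_pow_eq'
    exact ⟨m, hm⟩
  let d : Fin N → ℕ := fun i => Nat.find (hd i)
  have hd_spec : ∀ i, (π ^ d i) (rep i) = i := fun i => Nat.find_spec (hd i)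
  have hL : ∀ x : Fin N, ∃ m : ℕ, 0 < m ∧ (π ^ m) x = x := by
    intro x
    refine ⟨orderOf π, orderOf_pos π, ?_⟩
    rw [pow_orderOf_eq_one]
    rfl
  let L : Fin N → ℕ := fun x => Nat.find (hL x)
  have hL_pos : ∀ x, 0 < L x := fun x => (Nat.find_spec (hL x)).1
  have hL_spec : ∀ x, (π ^ L x) x = x := fun x => (Nat.find_spec (hL x)).2
  have hdL : ∀ i, d i < L (rep i) := by
    intro i
    by_contra h
    push_neg at h
    have h2 : (π ^ (d i - L (rep i))) (rep i) = i := by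
      have h3 := hd_spec i
      rwa [show d i = d i - L (rep i) + L (rep i) by omega, pow_add, Equiv.Perm.mul_apply,
        hL_spec] at h3
    exact Nat.find_min (hd i)
      (show d i - L (rep i) < d i by have := hL_pos (rep i); omega) h2
  have hdsucc : ∀ i, d i + 1 < L (rep i) → d (π i) = d i + 1 := by
    intro i hlt
    have hwit : (π ^ (d i + 1)) (rep (π i)) = π i := by
      rw [hrep_pi i, pow_succ', Equiv.Perm.mul_apply, hd_spec i]
    apply le_antisymm
    · exact Nat.find_le hwit
    · rcases Nat.eq_zero_or_pos (d (π i)) with h0 | hpos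
      · exfalso
        have h1 : (π ^ (0 : ℕ)) (rep (π i)) = π i := by rw [← h0]; exact hd_spec (π i)
        rw [hrep_pi i] at h1
        simp only [pow_zero, Equiv.Perm.one_apply] at h1
        have hper : (π ^ (d i + 1)) (rep i) = rep i := by
          rw [pow_succ', Equiv.Perm.mul_apply, hd_spec i, ← h1]
        exact Nat.find_min (hL (rep i)) hlt ⟨Nat.succ_pos _, hper⟩
      · obtain ⟨m, hm⟩ : ∃ m, d (π i) = m + 1 := ⟨d (π i) - 1, by omega⟩
        have h1 : (π ^ (d (π i))) (rep i) = π i := by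
          rw [← hrep_pi i]; exact hd_spec (π i)
        rw [hm, pow_succ', Equiv.Perm.mul_apply] at h1
        have h2 : (π ^ m) (rep i) = i := π.injective h1
        have h3 : d i ≤ m := Nat.find_le h2
        omega
  have hwrap : ∀ i, d i + 1 = L (rep i) → π i = rep i ∧ d (π i) = 0 := by
    intro i heq
    have h1 : π i = rep i := by
      have h2 := hL_spec (rep i)
      rwa [← heq, pow_succ', Equiv.Perm.mul_apply, hd_spec i] at h2
    refine ⟨h1, ?_⟩
    have h3 : (π ^ (0 : ℕ)) (rep (π i)) = π i := by
      rw [hrep_pi i, pow_zero, Equiv.Perm.one_apply, ← h1]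
    exact Nat.le_zero.mp (Nat.find_le h3)
  let P : Fin N → ℕ → (WittVector p k)ˣ := fun x =>
    Nat.rec (motive := fun _ => (WittVector p k)ˣ) 1 (fun m Pm => Φ Pm * u ((π ^ m) x))
  have hP0 : ∀ x, P x 0 = 1 := fun _ => rfl
  have hPs : ∀ x m, P x (m + 1) = Φ (P x m) * u ((π ^ m) x) := fun _ _ => rfl
  have htex : ∀ x : Fin N, ∃ t : (WittVector p k)ˣ, Φ^[L x] t = t * (P x (L x))⁻¹ :=
    fun x => hsol (L x) (hL_pos x) (P x (L x))
  choose t ht using htex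
  let v : Fin N → (WittVector p k)ˣ := fun i => Φ^[d i] (t (rep i)) * P (rep i) (d i)
  have key : ∀ i, v (π i) = Φ (v i) * u i := by
    intro i
    have hui : u i = u ((π ^ d i) (rep i)) := by rw [hd_spec i]
    have hrhs : Φ (v i) * u i = Φ^[d i + 1] (t (rep i)) * P (rep i) (d i + 1) := by
      show Φ (Φ^[d i] (t (rep i)) * P (rep i) (d i)) * u i = _
      rw [map_mul, ← Function.iterate_succ_apply' Φ (d i) (t (rep i)), hPs, mul_assoc, hui]
    have hle : d i + 1 ≤ L (rep i) := hdL i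
    rcases lt_or_eq_of_le hle with hlt | heq
    · rw [hrhs]
      show Φ^[d (π i)] (t (rep (π i))) * P (rep (π i)) (d (π i)) = _
      rw [hrep_pi i, hdsucc i hlt]
    · obtain ⟨hpi, h0⟩ := hwrap i heq
      have hvpi : v (π i) = t (rep i) := by
        show Φ^[d (π i)] (t (rep (π i))) * P (rep (π i)) (d (π i)) = t (rep i)
        rw [hrep_pi i, h0, hP0, Function.iterate_zero_apply, mul_one]
      rw [hvpi, hrhs, heq, ht (rep i), inv_mul_cancel_right]
  refine ⟨v, fun i => ?_⟩
  have hv : ((v (π i) : WittVector p k)) =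
      WittVector.frobenius ((v i : WittVector p k)) * (u i : WittVector p k) := by
    rw [key i]
    rfl
  rw [hsemi, hφa i, smul_smul, smul_smul, smul_smul, hv]
  congr 1
  ring
end

section
/- Let R be a commutative ring, M, M₁ finitely generated projective R-modules, x ∈ R a non-zero-divisor, and (t_α)_{α∈J}, (t̃_α)_{α∈J̃} two families of tensors in the essential tensor algebra T(M[1/x]) such that the subgroup of GL_{M[1/x]} fixing all t_α equals the subgroup fixing all t̃_α (call it G). Given corresponding families (v_α)_{α∈J}, (ṽ_α)_{α∈J̃} in T(M₁[1/x]) obtained by transporting (t_α) and (t̃_α) along a fixed isomorphism i: M[1/x] ≅ M₁[1/x], there exists an isomorphism (M, (t̃_α)) ≅ (M₁, (ṽ_α)) if and only if there exists an isomorphism (M, (t_α)) ≅ (M₁, (v_α)). -/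
open scoped TensorProduct

/-- The graded piece `N^{⊗ s} ⊗ N^{* ⊗ t}` of the essential tensor algebra
`T(N) = ⊕_{s,t} N^{⊗s} ⊗ N^{*⊗t}` of a module `N`. -/
abbrev TensorPiece (A : Type*) [CommRing A] (N : Type*) [AddCommGroup N] [Module A N]
    (st : ℕ × ℕ) : Type _ :=
  (⨂[A] (_ : Fin st.1), N) ⊗[A] (⨂[A] (_ : Fin st.2), Module.Dual A N)

/-- The equivalence induced on a graded piece of the essential tensor algebra by a linear
isomorphism (acting on duals via the inverse transpose). -/
noncomputable def tensorPieceCongr {A : Type*} [CommRing A]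
    {M N : Type*} [AddCommGroup M] [Module A M] [AddCommGroup N] [Module A N]
    (e : M ≃ₗ[A] N) (st : ℕ × ℕ) :
    TensorPiece A M st ≃ₗ[A] TensorPiece A N st :=
  TensorProduct.congr (PiTensorProduct.congr fun _ => e)
    (PiTensorProduct.congr fun _ => e.symm.dualMap)


lemma tensorPieceCongr_trans {A : Type*} [CommRing A]
    {M N P : Type*} [AddCommGroup M] [Module A M] [AddCommGroup N] [Module A N]
    [AddCommGroup P] [Module A P]
    (e : M ≃ₗ[A] N) (e' : N ≃ₗ[A] P) (st : ℕ × ℕ) :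
    tensorPieceCongr (e.trans e') st
      = (tensorPieceCongr e st).trans (tensorPieceCongr e' st) := by
  apply LinearEquiv.toLinearMap_injective
  ext m f
  simp [tensorPieceCongr, PiTensorProduct.congr_tprod]
  rfl

lemma tensorPieceCongr_refl {A : Type*} [CommRing A]
    {M : Type*} [AddCommGroup M] [Module A M] (st : ℕ × ℕ) :
    tensorPieceCongr (LinearEquiv.refl A M) st = LinearEquiv.refl A _ := by
  apply LinearEquiv.toLinearMap_injective
  ext m f
  simp [tensorPieceCongr, PiTensorProduct.congr_tprod]

lemma tensorPieceCongr_symm_cancel {A : Type*} [CommRing A]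
    {M N : Type*} [AddCommGroup M] [Module A M] [AddCommGroup N] [Module A N]
    (e : M ≃ₗ[A] N) (st : ℕ × ℕ) (z : TensorPiece A M st) :
    tensorPieceCongr e.symm st (tensorPieceCongr e st z) = z := by
  have h := tensorPieceCongr_trans e e.symm st
  rw [LinearEquiv.self_trans_symm, tensorPieceCongr_refl] at h
  have := congrArg (fun q : TensorPiece A M st ≃ₗ[A] TensorPiece A M st => q z) h
  simpa using this.symm

lemma tensorPieceCongr_cancel_symm {A : Type*} [CommRing A]
    {M N : Type*} [AddCommGroup M] [Module A M] [AddCommGroup N] [Module A N]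
    (e : M ≃ₗ[A] N) (st : ℕ × ℕ) (z : TensorPiece A N st) :
    tensorPieceCongr e st (tensorPieceCongr e.symm st z) = z := by
  have h := tensorPieceCongr_trans e.symm e st
  rw [LinearEquiv.symm_trans_self, tensorPieceCongr_refl] at h
  have := congrArg (fun q : TensorPiece A N st ≃ₗ[A] TensorPiece A N st => q z) h
  simpa using this.symm

lemma tensorPieceCongr_trans_apply {A : Type*} [CommRing A]
    {M N P : Type*} [AddCommGroup M] [Module A M] [AddCommGroup N] [Module A N]
    [AddCommGroup P] [Module A P]
    (e : M ≃ₗ[A] N) (e' : N ≃ₗ[A] P) (st : ℕ × ℕ) (z : TensorPiece A M st) :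
    tensorPieceCongr (e.trans e') st z
      = tensorPieceCongr e' st (tensorPieceCongr e st z) := by
  rw [tensorPieceCongr_trans]; rfl

/-- Fact 2.5.1 (a): given two families of tensors `(t_α)_{α ∈ J}` and `(t̃_α)_{α ∈ J̃}` of
`T(M[1/x])` cutting out the same subgroup `G` of `GL_{M[1/x]}`, and the corresponding families
`(v_α)`, `(ṽ_α)` of `T(M₁[1/x])` obtained by transport along a fixed isomorphism
`i : M[1/x] ≅ M₁[1/x]`, there exists an isomorphism `(M, (t̃_α)) ≅ (M₁, (ṽ_α))` if and only
if there exists an isomorphism `(M, (t_α)) ≅ (M₁, (v_α))`. -/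
theorem tensor_family_iso_transfer
    {R : Type*} [CommRing R] (x : R) (hx : x ∈ nonZeroDivisors R)
    (A : Type*) [CommRing A] [Algebra R A] [IsLocalization.Away x A]
    (M M₁ : Type*) [AddCommGroup M] [Module R M] [AddCommGroup M₁] [Module R M₁]
    [Module.Finite R M] [Module.Projective R M]
    [Module.Finite R M₁] [Module.Projective R M₁]
    (MA M₁A : Type*) [AddCommGroup MA] [Module A MA] [AddCommGroup M₁A] [Module A M₁A]
    [Module R MA] [IsScalarTower R A MA] [Module R M₁A] [IsScalarTower R A M₁A]
    (ι : M →ₗ[R] MA) (ι₁ : M₁ →ₗ[R] M₁A)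
    [IsLocalizedModule (Submonoid.powers x) ι] [IsLocalizedModule (Submonoid.powers x) ι₁]
    {J J' : Type*} (d : J → ℕ × ℕ) (d' : J' → ℕ × ℕ)
    (t : (α : J) → TensorPiece A MA (d α))
    (t' : (α : J') → TensorPiece A MA (d' α))
    (hgrp : ∀ g : MA ≃ₗ[A] MA,
      (∀ α, tensorPieceCongr g (d α) (t α) = t α) ↔
      (∀ α, tensorPieceCongr g (d' α) (t' α) = t' α))
    (i : MA ≃ₗ[A] M₁A)
    (v : (α : J) → TensorPiece A M₁A (d α))
    (hv : ∀ α, tensorPieceCongr i (d α) (t α) = v α)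
    (v' : (α : J') → TensorPiece A M₁A (d' α))
    (hv' : ∀ α, tensorPieceCongr i (d' α) (t' α) = v' α) :
    (∃ (f : M ≃ₗ[R] M₁) (fA : MA ≃ₗ[A] M₁A),
        (∀ mm : M, fA (ι mm) = ι₁ (f mm)) ∧
        ∀ α, tensorPieceCongr fA (d' α) (t' α) = v' α) ↔
    (∃ (f : M ≃ₗ[R] M₁) (fA : MA ≃ₗ[A] M₁A),
        (∀ mm : M, fA (ι mm) = ι₁ (f mm)) ∧
        ∀ α, tensorPieceCongr fA (d α) (t α) = v α) := by
  constructor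
  · rintro ⟨f, fA, hcomm, ht⟩
    refine ⟨f, fA, hcomm, ?_⟩
    have hg : ∀ α, tensorPieceCongr (fA.trans i.symm) (d' α) (t' α) = t' α := by
      intro α
      rw [tensorPieceCongr_trans_apply, ht α, ← hv' α, tensorPieceCongr_symm_cancel]
    have hfix := (hgrp (fA.trans i.symm)).mpr hg
    intro α
    have h3 := hfix α
    rw [tensorPieceCongr_trans_apply] at h3
    have := congrArg (tensorPieceCongr i (d α)) h3
    rw [tensorPieceCongr_cancel_symm] at this
    rw [this, hv α]
  · rintro ⟨f, fA, hcomm, ht⟩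
    refine ⟨f, fA, hcomm, ?_⟩
    have hg : ∀ α, tensorPieceCongr (fA.trans i.symm) (d α) (t α) = t α := by
      intro α
      rw [tensorPieceCongr_trans_apply, ht α, ← hv α, tensorPieceCongr_symm_cancel]
    have hfix := (hgrp (fA.trans i.symm)).mp hg
    intro α
    have h3 := hfix α
    rw [tensorPieceCongr_trans_apply] at h3
    have := congrArg (tensorPieceCongr i (d' α)) h3
    rw [tensorPieceCongr_cancel_symm] at this
    rw [this, hv' α]
end

section
/- Let k be a perfect field of characteristic p > 0 and let R̂ = W(k)[[z₁,…,z_d]] with the Frobenius lift Φ sending z_l to z_l^p and acting as σ on W(k). Let M be a free W(k)-module of finite rank and let Φ⁰ be a Φ-linear endomorphism of M ⊗_{W(k)} R̂ which induces an isomorphism after inverting p. Then there is at most one connection ∇ on M ⊗ R̂ (with values in the p-adically completed module of differentials) such that Φ⁰ is horizontal, i.e., ∇ ∘ Φ⁰ = (Φ⁰ ⊗ dΦ) ∘ ∇. -/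
/-- The formal partial derivative `∂/∂z_l` on multivariate power series. -/
noncomputable def mvPowerSeriesPDeriv {d : ℕ} {A : Type*} [CommRing A] (l : Fin d)
    (f : MvPowerSeries (Fin d) A) : MvPowerSeries (Fin d) A :=
  fun m => (m l + 1) • MvPowerSeries.coeff (m + Finsupp.single l 1) f

/-!
The difference `E = D_l - D'_l` of two such connections is `R̂`-linear, so it is given by a
matrix `C`, and horizontality of `Φ⁰` becomes `C A = p z_l^{p-1} A Φ(C)`. Multiplying on the
right by `B` with `A B = p^s` and iterating, `p^{ns} C` is divisible by `z_l^{p^n - 1}` for every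
`n`, the exponent growing because each application of `Φ` multiplies it by `p`. As `p` is not a
zero divisor in `W(k)`, every coefficient of `C` vanishes.
-/

theorem Nat.sub_one_add_mul_pow_sub_one (q n : ℕ) :
    q - 1 + q * (q ^ n - 1) = q ^ (n + 1) - 1 := by
  rcases q with _ | q
  · simp
  · have hpos : 0 < (q + 1) ^ n := pow_pos q.succ_pos _
    have hle : q + 1 ≤ (q + 1) * (q + 1) ^ n := Nat.le_mul_of_pos_right _ hpos
    rw [pow_succ', Nat.mul_sub, mul_one]
    omega

def LinearMap.subOfLeibniz {R M : Type*} [Ring R] [AddCommGroup M] [Module R M] (δ : R → R)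
    (D D' : M → M) (hD : ∀ v w, D (v + w) = D v + D w) (hD' : ∀ v w, D' (v + w) = D' v + D' w)
    (hLD : ∀ (f : R) v, D (f • v) = f • D v + δ f • v)
    (hLD' : ∀ (f : R) v, D' (f • v) = f • D' v + δ f • v) : M →ₗ[R] M where
  toFun v := D v - D' v
  map_add' v w := by rw [hD, hD']; abel
  map_smul' f v := by rw [hLD, hLD', RingHom.id_apply, smul_sub]; abel

namespace Matrix

variable {ι R : Type*} [Fintype ι] [DecidableEq ι] [CommRing R]

theorem mul_eq_smul_mul_map_of_mulVec {A C : Matrix ι ι R} (Φ : R →+* R) (w : R)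
    (h : ∀ u : ι → R,
      C *ᵥ (A *ᵥ fun i => Φ (u i)) = w • (A *ᵥ fun i => Φ ((C *ᵥ u) i))) :
    C * A = w • (A * C.map Φ) := by
  refine ext_of_mulVec_single fun j => ?_
  have hΦ : (fun i => Φ ((Pi.single j 1 : ι → R) i)) = Pi.single j 1 := by
    simpa using funext (Pi.apply_single (fun _ => Φ) (fun _ => map_zero Φ) j (1 : R))
  have hmap : (fun i => Φ ((C *ᵥ Pi.single j 1) i)) = C.map Φ *ᵥ Pi.single j 1 := by
    ext i; rw [RingHom.map_mulVec, Function.comp_def, hΦ]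
  simpa only [hΦ, hmap, mulVec_mulVec, smul_mulVec] using h (Pi.single j 1)

theorem exists_pow_smul_eq_pow_smul_of_mul_eq_smul_mul_map {A B C : Matrix ι ι R} (Φ : R →+* R)
    {x y b : R} {q : ℕ} (hx : Φ x = x ^ q) (hb : Φ b = b) (hAB : A * B = b • 1)
    (hC : C * A = (y * x ^ (q - 1)) • (A * C.map Φ)) (n : ℕ) :
    ∃ G : Matrix ι ι R, b ^ n • C = x ^ (q ^ n - 1) • G := by
  induction n with
  | zero => exact ⟨C, by simp⟩
  | succ n ih =>
    obtain ⟨G, hG⟩ := ih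
    refine ⟨y • (A * G.map Φ * B), ?_⟩
    calc b ^ (n + 1) • C = b ^ n • (C * A * B) := by
          rw [pow_succ, mul_smul, Matrix.mul_assoc, hAB, Matrix.mul_smul, Matrix.mul_one]
      _ = (y * x ^ (q - 1)) • (A * (b ^ n • C).map Φ * B) := by
          rw [hC, map_smul' _ _ _ (map_mul Φ), map_pow, hb, Matrix.mul_smul, Matrix.smul_mul, Matrix.smul_mul, smul_comm]
      _ = x ^ (q ^ (n + 1) - 1) • y • (A * G.map Φ * B) := by
          rw [hG, map_smul' _ _ _ (map_mul Φ), map_pow, hx, Matrix.mul_smul, Matrix.smul_mul, smul_smul, smul_smul,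
            ← Nat.sub_one_add_mul_pow_sub_one, pow_add, pow_mul]
          ring_nf

end Matrix

theorem MvPowerSeries.eq_zero_of_forall_X_pow_dvd_C_pow_mul {σ A : Type*} [Semiring A] {a : A}
    (ha : IsLeftRegular a) (l : σ) {f : MvPowerSeries σ A}
    (h : ∀ N, ∃ n, X l ^ N ∣ C a ^ n * f) : f = 0 := by
  ext m
  obtain ⟨n, hn⟩ := h (m l + 1)
  have := X_pow_dvd_iff.mp hn m (Nat.lt_succ_self _)
  rw [← map_pow, coeff_C_mul] at this
  exact (ha.pow n) (by simpa using this)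

theorem connection_unique_complete_local_general
    (p : ℕ) [Fact p.Prime]
    (k : Type*) [Field k] [CharP k p]
    (d r : ℕ)
    (Φ : MvPowerSeries (Fin d) (WittVector p k) →+* MvPowerSeries (Fin d) (WittVector p k))
    (hΦX : ∀ l, Φ (MvPowerSeries.X l) = (MvPowerSeries.X l) ^ p)
    (Amat : Matrix (Fin r) (Fin r) (MvPowerSeries (Fin d) (WittVector p k)))
    (hAmat : ∃ (s : ℕ) (Bmat : Matrix (Fin r) (Fin r) (MvPowerSeries (Fin d) (WittVector p k))),
      Amat * Bmat = (p : MvPowerSeries (Fin d) (WittVector p k)) ^ s • 1 ∧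
      Bmat * Amat = (p : MvPowerSeries (Fin d) (WittVector p k)) ^ s • 1)
    (D D' : Fin d → (Fin r → MvPowerSeries (Fin d) (WittVector p k)) →
      (Fin r → MvPowerSeries (Fin d) (WittVector p k)))
    (haddD : ∀ l v w, D l (v + w) = D l v + D l w)
    (haddD' : ∀ l v w, D' l (v + w) = D' l v + D' l w)
    (hLeibD : ∀ l (f : MvPowerSeries (Fin d) (WittVector p k)) v,
      D l (f • v) = f • D l v + (mvPowerSeriesPDeriv l f) • v)
    (hLeibD' : ∀ l (f : MvPowerSeries (Fin d) (WittVector p k)) v,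
      D' l (f • v) = f • D' l v + (mvPowerSeriesPDeriv l f) • v)
    (hhorD : ∀ l v, D l (Amat.mulVec fun i => Φ (v i)) =
      ((p : MvPowerSeries (Fin d) (WittVector p k)) * (MvPowerSeries.X l) ^ (p - 1)) •
        (Amat.mulVec fun i => Φ (D l v i)))
    (hhorD' : ∀ l v, D' l (Amat.mulVec fun i => Φ (v i)) =
      ((p : MvPowerSeries (Fin d) (WittVector p k)) * (MvPowerSeries.X l) ^ (p - 1)) •
        (Amat.mulVec fun i => Φ (D' l v i))) :
    D = D' := by
  obtain ⟨s, B, hAB, -⟩ := hAmat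
  funext l v
  set E := LinearMap.subOfLeibniz (mvPowerSeriesPDeriv l) (D l) (D' l) (haddD l) (haddD' l)
    (hLeibD l) (hLeibD' l)
  set C := LinearMap.toMatrix' E
  have hEC (u) : D l u - D' l u = C.mulVec u :=
    (LinearMap.congr_fun (Matrix.toLin'_toMatrix' E) u).symm
  have hCA : C * Amat = ((p : MvPowerSeries (Fin d) (WittVector p k)) * .X l ^ (p - 1)) •
      (Amat * C.map Φ) := by
    refine Matrix.mul_eq_smul_mul_map_of_mulVec Φ _ fun u => ?_
    rw [← hEC, ← hEC, hhorD, hhorD', ← smul_sub, ← Matrix.mulVec_sub]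
    congr 2
    funext i
    exact (map_sub Φ _ _).symm
  have hp_pow :
      (p : MvPowerSeries (Fin d) (WittVector p k)) ^ s = .C ((p : WittVector p k) ^ s) := by
    rw [map_pow, map_natCast]
  have hC : C = 0 := by
    ext i j : 1
    refine MvPowerSeries.eq_zero_of_forall_X_pow_dvd_C_pow_mul
      (IsRegular.of_ne_zero (pow_ne_zero s (WittVector.p_nonzero p k))).left l fun N => ⟨N, ?_⟩
    obtain ⟨G, hG⟩ := Matrix.exists_pow_smul_eq_pow_smul_of_mul_eq_smul_mul_map Φ (hΦX l)
      (by rw [map_pow, map_natCast]) hAB hCA N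
    rw [← hp_pow, ← smul_eq_mul, ← Matrix.smul_apply, hG, Matrix.smul_apply, smul_eq_mul]
    have hN : N ≤ p ^ N - 1 := Nat.le_sub_one_of_lt (Nat.lt_pow_self (Fact.out : p.Prime).one_lt)
    exact (pow_dvd_pow _ hN).mul_right _
  rw [← sub_eq_zero, hEC, hC, Matrix.zero_mulVec]

/-- Over `R̂ = W(k)[[z₁,…,z_d]]` with the Frobenius lift `Φ` (sending `z_l ↦ z_l^p` and acting
as `σ` on `W(k)`), let `Φ⁰` be a `Φ`-linear endomorphism of a free module `R̂^r` which induces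
an isomorphism after inverting `p` (encoded by a matrix `Amat` invertible up to a power of
`p`, via `Φ⁰(v) = Amat · Φ(v)`).  Then there is at most one connection
`∇ = (D_1, …, D_d)` for which `Φ⁰` is horizontal, i.e. `D_l (Φ⁰ v) = p z_l^{p-1} Φ⁰(D_l v)`. -/
theorem connection_unique_complete_local
    (p : ℕ) (hp : p.Prime) [Fact p.Prime]
    (k : Type*) [Field k] [CharP k p] [PerfectRing k p]
    (d r : ℕ)
    (Φ : MvPowerSeries (Fin d) (WittVector p k) →+* MvPowerSeries (Fin d) (WittVector p k))
    (hΦX : ∀ l, Φ (MvPowerSeries.X l) = (MvPowerSeries.X l) ^ p)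
    (hΦC : ∀ a : WittVector p k,
      Φ (MvPowerSeries.C a : MvPowerSeries (Fin d) (WittVector p k)) =
        (MvPowerSeries.C (WittVector.frobenius a) : MvPowerSeries (Fin d) (WittVector p k)))
    (Amat : Matrix (Fin r) (Fin r) (MvPowerSeries (Fin d) (WittVector p k)))
    (hAmat : ∃ (s : ℕ) (Bmat : Matrix (Fin r) (Fin r) (MvPowerSeries (Fin d) (WittVector p k))),
      Amat * Bmat = (p : MvPowerSeries (Fin d) (WittVector p k)) ^ s • 1 ∧
      Bmat * Amat = (p : MvPowerSeries (Fin d) (WittVector p k)) ^ s • 1)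
    (D D' : Fin d → (Fin r → MvPowerSeries (Fin d) (WittVector p k)) →
      (Fin r → MvPowerSeries (Fin d) (WittVector p k)))
    (haddD : ∀ l v w, D l (v + w) = D l v + D l w)
    (haddD' : ∀ l v w, D' l (v + w) = D' l v + D' l w)
    (hLeibD : ∀ l (f : MvPowerSeries (Fin d) (WittVector p k)) v,
      D l (f • v) = f • D l v + (mvPowerSeriesPDeriv l f) • v)
    (hLeibD' : ∀ l (f : MvPowerSeries (Fin d) (WittVector p k)) v,
      D' l (f • v) = f • D' l v + (mvPowerSeriesPDeriv l f) • v)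
    (hhorD : ∀ l v, D l (Amat.mulVec fun i => Φ (v i)) =
      ((p : MvPowerSeries (Fin d) (WittVector p k)) * (MvPowerSeries.X l) ^ (p - 1)) •
        (Amat.mulVec fun i => Φ (D l v i)))
    (hhorD' : ∀ l v, D' l (Amat.mulVec fun i => Φ (v i)) =
      ((p : MvPowerSeries (Fin d) (WittVector p k)) * (MvPowerSeries.X l) ^ (p - 1)) •
        (Amat.mulVec fun i => Φ (D' l v i))) :
    D = D' :=
  connection_unique_complete_local_general p k d r Φ hΦX Amat hAmat D D' haddD haddD' hLeibD hLeibD'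
    hhorD hhorD'
end

section
/- Let k be a perfect field of characteristic p > 0 with Frobenius σ on W(k), let R_e be the p-adic completion of the divided power hull of (X^e) in W(k)[[X]], with Frobenius lift Φ_k extending σ and sending X to X^p, and let N be a free R_e-module with a Φ_k-linear endomorphism φ_N. If ∇ and ∇̃ are two connections on N such that φ_N is horizontal with respect to each (∇∘φ_N = (φ_N ⊗ dΦ_k)∘∇ and likewise for ∇̃), then ∇ = ∇̃. -/
/-!
The difference `E = ∇ - ∇̃` is `A`-linear, since the Leibniz terms cancel, so it is a matrix `M`.
Horizontality of `φ_N = Amat · Φ` under both connections gives `M · Amat = p X^{p-1} · Amat · Φ(M)`.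
Multiplying on the right by `Bmat` expresses `p^t M` through `Φ(M)`. Since `Φ(X) = X^p`, this turns
`p^s M ∈ X^q · Mat(A)` into `p^{s+t} M ∈ X^{q+1} · Mat(A)`. By induction, `M` is divisible by every
power of `X` after inverting `p`, so `M = 0` by separatedness.
-/

open Matrix

section

variable {A : Type*} [CommRing A]

def LinearMap.ofLeibnizSub {M : Type*} [AddCommGroup M] [Module A M] (der : A → A)
    (D D' : M → M) (haddD : ∀ v w, D (v + w) = D v + D w)
    (haddD' : ∀ v w, D' (v + w) = D' v + D' w)
    (hLeibD : ∀ (f : A) v, D (f • v) = f • D v + der f • v)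
    (hLeibD' : ∀ (f : A) v, D' (f • v) = f • D' v + der f • v) : M →ₗ[A] M where
  toFun := D - D'
  map_add' v w := by simp only [Pi.sub_apply, haddD, haddD']; abel
  map_smul' f v := by simp only [Pi.sub_apply, hLeibD, hLeibD', smul_sub, RingHom.id_apply]; abel

variable {n : Type*} [Fintype n] [DecidableEq n]

theorem LinearMap.toMatrix'_mul_eq_smul_mul_map (Φ : A →+* A) (c : A) (P : Matrix n n A)
    (E : (n → A) →ₗ[A] n → A)
    (hE : ∀ v, E (P *ᵥ (Φ ∘ v)) = c • (P *ᵥ (Φ ∘ E v))) :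
    toMatrix' E * P = c • (P * (toMatrix' E).map Φ) := by
  refine ext_of_mulVec_single fun j => ?_
  have hΦ : Φ ∘ (Pi.single j 1 : n → A) = Pi.single j 1 := by
    ext i; by_cases h : i = j <;> simp [h]
  have hmap : (toMatrix' E).map Φ *ᵥ Pi.single j 1 = Φ ∘ E (Pi.single j 1) := by
    ext i; rw [Function.comp_apply, ← toMatrix'_mulVec, RingHom.map_mulVec, hΦ]
  rw [← mulVec_mulVec, toMatrix'_mulVec, smul_mulVec, ← mulVec_mulVec, hmap, ← hE, hΦ]

theorem Matrix.exists_pow_smul_eq_pow_smul {Φ : A →+* A} {X π c : A} {m k t : ℕ}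
    (hΦX : Φ X = X ^ m) (hΦπ : Φ π = π) (hm : 1 ≤ m) (hk : 1 ≤ k) {M P Q : Matrix n n A}
    (hPQ : P * Q = π ^ t • 1) (hM : M * P = (c * X ^ k) • (P * M.map Φ)) (q : ℕ) :
    ∃ (s : ℕ) (N : Matrix n n A), π ^ s • M = X ^ q • N := by
  induction q with
  | zero => exact ⟨0, M, by simp⟩
  | succ q ih =>
    obtain ⟨s, N, hN⟩ := ih
    have hMt : π ^ t • M = (c * X ^ k) • (P * M.map Φ * Q) := by
      calc π ^ t • M = M * (P * Q) := by rw [hPQ, Matrix.mul_smul, Matrix.mul_one]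
        _ = _ := by rw [← Matrix.mul_assoc, hM, Matrix.smul_mul]
    have hNΦ : π ^ s • M.map Φ = X ^ (m * q) • N.map Φ := by
      have := congrArg (Matrix.map · Φ) hN
      simp only [Matrix.map_smul' _ _ _ (map_mul Φ), map_pow, hΦX, hΦπ] at this
      rwa [← pow_mul] at this
    obtain ⟨d, hd⟩ := Nat.exists_eq_add_of_le (show q + 1 ≤ k + m * q by nlinarith)
    refine ⟨s + t, (c * X ^ d) • (P * N.map Φ * Q), ?_⟩
    calc π ^ (s + t) • M = (c * X ^ k) • (P * (π ^ s • M.map Φ) * Q) := by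
          rw [pow_add, mul_smul, hMt, Matrix.mul_smul, Matrix.smul_mul, smul_comm (π ^ s)]
      _ = X ^ (q + 1) • (c * X ^ d) • (P * N.map Φ * Q) := by
          rw [hNΦ, Matrix.mul_smul, Matrix.smul_mul, smul_smul, smul_smul, mul_assoc, ← pow_add,
            hd, pow_add]
          congr 1; ring

end

/-- `A` plays the role of `R_e`, `hsep` is the `X`-adic separatedness of `R_e[1/p]`, `D` and `D'`
are the `dX`-components of `∇` and `∇̃`, and `φ_N(v) = Amat · Φ(v)` with `Amat` invertible up to a
power of `p`. -/
theorem connection_unique_Re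
    (p : ℕ) (hp : p.Prime)
    (A : Type*) [CommRing A] (X : A)
    (Φ : A →+* A) (hΦX : Φ X = X ^ p)
    (hsep : ∀ a : A, (∀ q : ℕ, ∃ (s : ℕ) (b : A), (p : A) ^ s * a = X ^ q * b) → a = 0)
    (der : A → A)
    (r : ℕ) (Amat : Matrix (Fin r) (Fin r) A)
    (hAmat : ∃ (s : ℕ) (Bmat : Matrix (Fin r) (Fin r) A),
      Amat * Bmat = (p : A) ^ s • (1 : Matrix (Fin r) (Fin r) A) ∧
      Bmat * Amat = (p : A) ^ s • (1 : Matrix (Fin r) (Fin r) A))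
    (D D' : (Fin r → A) → (Fin r → A))
    (haddD : ∀ v w, D (v + w) = D v + D w)
    (haddD' : ∀ v w, D' (v + w) = D' v + D' w)
    (hLeibD : ∀ (f : A) v, D (f • v) = f • D v + (der f) • v)
    (hLeibD' : ∀ (f : A) v, D' (f • v) = f • D' v + (der f) • v)
    (hhorD : ∀ v, D (Amat.mulVec fun i => Φ (v i)) =
      ((p : A) * X ^ (p - 1)) • (Amat.mulVec fun i => Φ (D v i)))
    (hhorD' : ∀ v, D' (Amat.mulVec fun i => Φ (v i)) =
      ((p : A) * X ^ (p - 1)) • (Amat.mulVec fun i => Φ (D' v i))) :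
    D = D' := by
  obtain ⟨t, Bmat, hAB, -⟩ := hAmat
  let E := LinearMap.ofLeibnizSub der D D' haddD haddD' hLeibD hLeibD'
  have hE : ∀ v, E (Amat *ᵥ (Φ ∘ v)) = ((p : A) * X ^ (p - 1)) • (Amat *ᵥ (Φ ∘ E v)) := by
    intro v
    have hΦ : Φ ∘ E v = Φ ∘ D v - Φ ∘ D' v := by ext i; exact map_sub Φ _ _
    rw [hΦ, mulVec_sub, smul_sub]
    exact congrArg₂ (· - ·) (hhorD v) (hhorD' v)
  have hdiv := Matrix.exists_pow_smul_eq_pow_smul hΦX (map_natCast Φ p) hp.one_le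
    (Nat.le_sub_one_of_lt hp.one_lt) hAB (E.toMatrix'_mul_eq_smul_mul_map Φ _ Amat hE)
  have hzero : LinearMap.toMatrix' E = 0 := by
    ext i j
    refine hsep _ fun q => ?_
    obtain ⟨s, N, hN⟩ := hdiv q
    exact ⟨s, N i j, congrFun (congrFun hN i) j⟩
  funext v
  have hEv : 0 = E v := by rw [← LinearMap.toMatrix'_mulVec, hzero, zero_mulVec]
  exact sub_eq_zero.1 hEv.symm
end

section
/- Let k be an algebraically closed field of characteristic p, and let γ₁,…,γ_r ∈ k be elements that are linearly independent over the subfield 𝔽_{p^q} ⊆ k. Then the Moore-type matrix A ∈ M_r(k) whose (i,j) entry is γ_i^{p^{q(j-1)}} is invertible. -/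
/-!
If `A d = 0` for some `d ≠ 0`, the linearized polynomial `f = ∑ⱼ dⱼ X^{p^{qj}}` vanishes at every
`γᵢ`. Since `f` is additive and commutes with scalars from `𝔽_{p^q}`, it then vanishes on all
`p^{qr}` distinct `𝔽_{p^q}`-combinations of the `γᵢ`, while its degree is at most `p^{q(r-1)}`;
so `f = 0`, and hence `d = 0` because the exponents `p^{qj}` are distinct.
-/

open Polynomial Matrix

theorem pow_pow_eq_self_of_pow_eq_self {M : Type*} [Monoid M] {x : M} {m : ℕ} (hx : x ^ m = x) :
    ∀ j : ℕ, x ^ (m ^ j) = x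
  | 0 => pow_one x
  | j + 1 => by rw [pow_succ, pow_mul, pow_pow_eq_self_of_pow_eq_self hx j, hx]

section Frobenius

variable {R : Type*} [CommSemiring R] (p : ℕ) [ExpChar R p] {q : ℕ}

theorem sum_mul_pow_char_pow_of_pow_eq_self {ι : Type*} (s : Finset ι) {c : ι → R}
    (hc : ∀ i ∈ s, c i ^ p ^ q = c i) (γ : ι → R) (j : ℕ) :
    (∑ i ∈ s, c i * γ i) ^ p ^ (q * j) = ∑ i ∈ s, c i * γ i ^ p ^ (q * j) := by
  rw [sum_pow_char_pow]
  refine Finset.sum_congr rfl fun i hi => ?_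
  rw [mul_pow, pow_mul p, pow_pow_eq_self_of_pow_eq_self (hc i hi)]

end Frobenius

theorem card_rootSet_X_pow_sub_X (k : Type*) [Field k] [IsAlgClosed k] (p : ℕ) [CharP k p]
    {n : ℕ} (hpn : p ∣ n) (hn : 1 < n) :
    Fintype.card ((X ^ n - X : k[X]).rootSet k) = n := by
  rw [card_rootSet_eq_natDegree (galois_poly_separable p n hpn) (IsAlgClosed.splits _),
    FiniteField.X_pow_card_sub_X_natDegree_eq k hn]

theorem mem_rootSet_X_pow_sub_X {k : Type*} [Field k] {n : ℕ} (hn : 1 < n) {x : k} :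
    x ∈ (X ^ n - X : k[X]).rootSet k ↔ x ^ n = x := by
  simp [mem_rootSet, FiniteField.X_pow_card_sub_X_ne_zero k hn, sub_eq_zero]

def mooreMatrix {k : Type*} [Monoid k] {r : ℕ} (p q : ℕ) (γ : Fin r → k) :
    Matrix (Fin r) (Fin r) k :=
  Matrix.of fun i j => γ i ^ p ^ (q * (j : ℕ))

section Linearized

variable {k : Type*} [CommRing k] {r : ℕ} (p q : ℕ)

noncomputable def linearizedPolynomial (d : Fin r → k) : k[X] :=
  ∑ j : Fin r, monomial (p ^ (q * (j : ℕ))) (d j)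

variable {p q}

theorem eval_linearizedPolynomial (d : Fin r → k) (x : k) :
    (linearizedPolynomial p q d).eval x = ∑ j, d j * x ^ p ^ (q * (j : ℕ)) := by
  simp [linearizedPolynomial, eval_finsetSum]

theorem eval_linearizedPolynomial_eq_mulVec (γ d : Fin r → k) (i : Fin r) :
    (linearizedPolynomial p q d).eval (γ i) = (mooreMatrix p q γ *ᵥ d) i := by
  simp only [eval_linearizedPolynomial, Matrix.mulVec, dotProduct, mooreMatrix, Matrix.of_apply,
    mul_comm]

theorem eval_linearizedPolynomial_sum_mul [ExpChar k p] {c : Fin r → k}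
    (hc : ∀ i, c i ^ p ^ q = c i) (γ d : Fin r → k) :
    (linearizedPolynomial p q d).eval (∑ i, c i * γ i) =
      ∑ i, c i * (mooreMatrix p q γ *ᵥ d) i := by
  simp only [← eval_linearizedPolynomial_eq_mulVec, eval_linearizedPolynomial,
    sum_mul_pow_char_pow_of_pow_eq_self p _ (fun i _ => hc i), Finset.mul_sum]
  rw [Finset.sum_comm]
  exact Finset.sum_congr rfl fun i _ => Finset.sum_congr rfl fun j _ => by ring

theorem coeff_linearizedPolynomial (hp : 1 < p) (hq : 0 < q) (d : Fin r → k) (j : Fin r) :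
    (linearizedPolynomial p q d).coeff (p ^ (q * (j : ℕ))) = d j := by
  have hinj : Function.Injective fun j : Fin r => p ^ (q * (j : ℕ)) :=
    (Nat.pow_right_injective hp).comp ((mul_right_injective₀ hq.ne').comp Fin.val_injective)
  simp [linearizedPolynomial, finsetSum_coeff, coeff_monomial, hinj.eq_iff]

theorem linearizedPolynomial_eq_zero_iff (hp : 1 < p) (hq : 0 < q) {d : Fin r → k} :
    linearizedPolynomial p q d = 0 ↔ d = 0 := by
  refine ⟨fun h => funext fun j => ?_, fun h => by simp [h, linearizedPolynomial]⟩
  rw [← coeff_linearizedPolynomial hp hq d j, h, coeff_zero, Pi.zero_apply]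

theorem natDegree_linearizedPolynomial_lt (hp : 1 < p) (hq : 0 < q) (d : Fin r → k) :
    (linearizedPolynomial p q d).natDegree < p ^ (q * r) := by
  have hpos : 0 < p ^ (q * r) := Nat.pos_of_ne_zero (by positivity)
  refine (natDegree_sum_le_of_forall_le _ _ (n := p ^ (q * r) - 1) fun j _ => ?_).trans_lt
    (Nat.sub_lt hpos one_pos)
  refine (natDegree_monomial_le _).trans (Nat.le_sub_one_of_lt ?_)
  exact Nat.pow_lt_pow_right hp (Nat.mul_lt_mul_of_pos_left j.isLt hq)

end Linearized

theorem sum_mul_injective_of_independent {k : Type*} [CommRing k] {p q r : ℕ} [ExpChar k p]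
    {S : Set k} (hS : ∀ x ∈ S, x ^ p ^ q = x) {γ : Fin r → k}
    (hind : ∀ c : Fin r → k, (∀ i, c i ^ p ^ q = c i) → ∑ i, c i * γ i = 0 → c = 0) :
    Function.Injective fun c : Fin r → S => ∑ i, (c i : k) * γ i := by
  intro c c' hcc'
  have hsub : ∀ i, ((c i : k) - c' i) ^ p ^ q = (c i : k) - c' i := fun i => by
    rw [sub_pow_expChar_pow, hS _ (c i).2, hS _ (c' i).2]
  have hzero : ∑ i, ((c i : k) - c' i) * γ i = 0 := by
    simpa only [sub_mul, Finset.sum_sub_distrib, sub_eq_zero] using hcc'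
  funext i
  exact Subtype.ext (sub_eq_zero.1 (congrFun (hind _ hsub hzero) i))

/-- Moore determinant criterion: if `γ₁,…,γ_r` are elements of an algebraically closed field
`k` of characteristic `p` that are linearly independent over the finite subfield `𝔽_{p^q}`
(the fixed field of `x ↦ x^{p^q}`), then the Moore-type matrix with entries
`γ_i^{p^{q(j-1)}}` is invertible. -/
theorem moore_matrix_invertible
    (p q r : ℕ) (hp : p.Prime) (hq : 0 < q)
    (k : Type*) [Field k] [CharP k p] [IsAlgClosed k]
    (γ : Fin r → k)
    (hind : ∀ c : Fin r → k, (∀ i, c i ^ (p ^ q) = c i) →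
      (∑ i, c i * γ i = 0) → c = 0) :
    IsUnit (Matrix.of (fun i j : Fin r => γ i ^ (p ^ (q * (j : ℕ)))) :
      Matrix (Fin r) (Fin r) k) := by
  have : Fact p.Prime := ⟨hp⟩
  have hpq : 1 < p ^ q := Nat.one_lt_pow hq.ne' hp.one_lt
  set F := (X ^ p ^ q - X : k[X]).rootSet k
  have hF : ∀ x ∈ F, x ^ p ^ q = x := fun x hx => (mem_rootSet_X_pow_sub_X hpq).1 hx
  change IsUnit (mooreMatrix p q γ)
  rw [isUnit_iff_isUnit_det, isUnit_iff_ne_zero, Ne, ← exists_mulVec_eq_zero_iff]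
  rintro ⟨d, hd, hMd⟩
  refine hd ((linearizedPolynomial_eq_zero_iff hp.one_lt hq).1 ?_)
  refine eq_zero_of_natDegree_lt_card_of_eval_eq_zero _
    (sum_mul_injective_of_independent hF hind) (fun c => ?_) ?_
  · simp [eval_linearizedPolynomial_sum_mul fun i => hF _ (c i).2, hMd]
  · rw [Fintype.card_fun, card_rootSet_X_pow_sub_X k p (dvd_pow_self p hq.ne') hpq,
      Fintype.card_fin, ← pow_mul]
    exact natDegree_linearizedPolynomial_lt hp.one_lt hq d
end
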